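/- Let y ∈ ℝ^m be nonzero and let d ∈ ℝ^m with ‖d‖ = 1. Then d(y/‖y‖, cone{d}) ≤ (‖(y,1)‖/‖y‖) · d((y,1)/‖(y,1)‖, cone{(d,0)}). -/

import Mathlib

/-! Rays are cones, so both distances scale linearly under positive dilations and the inequality
reduces to `d(y, cone{d}) ≤ d((y,1), cone{(d,0)})`. That holds because the projection onto the
first factor is 1-Lipschitz, maps `cone{(d,0)}` into `cone{d}` and sends `(y,1)` to `y`. -/

open Metric Set

noncomputable section

/-- `ℝ^m` as a Euclidean space. -/
abbrev Em (m : ℕ) := EuclideanSpace ℝ (Fin m)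

/-- `ℝ^(m+1)` realized as the L²-product `ℝ^m × ℝ`. -/
abbrev Em1 (m : ℕ) := WithLp 2 (Em m × ℝ)

/-- The ray `cone {v} = {λ • v : λ ≥ 0}`. -/
def ray {V : Type*} [AddCommMonoid V] [Module ℝ V] (v : V) : Set V :=
  {x | ∃ l : ℝ, 0 ≤ l ∧ x = l • v}

/-- The vector `(y, 1) ∈ ℝ^(m+1)` obtained by appending a last coordinate `1` to `y`. -/
def lift1 {m : ℕ} (y : Em m) : Em1 m := (WithLp.equiv 2 (Em m × ℝ)).symm (y, 1)

/-- The vector `(y, 0) ∈ ℝ^(m+1)` obtained by appending a last coordinate `0` to `y`. -/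
def lift0 {m : ℕ} (y : Em m) : Em1 m := (WithLp.equiv 2 (Em m × ℝ)).symm (y, 0)

open scoped Pointwise in
theorem smul_ray_of_pos {V : Type*} [AddCommMonoid V] [Module ℝ V] {c : ℝ} (hc : 0 < c)
    (v : V) : c • ray v = ray v := by
  ext x
  simp only [Set.mem_smul_set, ray, Set.mem_ofPred_eq]
  constructor
  · rintro ⟨_, ⟨l, hl, rfl⟩, rfl⟩
    exact ⟨c * l, by positivity, (mul_smul c l v).symm⟩
  · rintro ⟨l, hl, rfl⟩
    refine ⟨(c⁻¹ * l) • v, ⟨c⁻¹ * l, by positivity, rfl⟩, ?_⟩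
    rw [smul_smul, mul_inv_cancel_left₀ hc.ne']

theorem zero_mem_ray {V : Type*} [AddCommMonoid V] [Module ℝ V] (v : V) : (0 : V) ∈ ray v :=
  ⟨0, le_rfl, (zero_smul ℝ v).symm⟩

theorem infDist_smul_ray {E : Type*} [NormedAddCommGroup E] [NormedSpace ℝ E] {c : ℝ}
    (hc : 0 ≤ c) (x v : E) : infDist (c • x) (ray v) = c * infDist x (ray v) := by
  rcases hc.eq_or_lt with rfl | hc
  · simp [infDist_zero_of_mem (zero_mem_ray v)]
  · simpa only [smul_ray_of_pos hc, Real.norm_of_nonneg hc.le] using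
      infDist_smul₀ hc.ne' (ray v) x

theorem mapsTo_ray {V W : Type*} [AddCommMonoid V] [Module ℝ V] [AddCommMonoid W] [Module ℝ W]
    (f : V →ₗ[ℝ] W) (v : V) : MapsTo f (ray v) (ray (f v)) := by
  rintro _ ⟨l, hl, rfl⟩
  exact ⟨l, hl, f.map_smul l v⟩

theorem LipschitzWith.infDist_le_of_mapsTo {α β : Type*} [PseudoMetricSpace α]
    [PseudoMetricSpace β] {f : α → β} (hf : LipschitzWith 1 f) {s : Set α} {t : Set β}
    (hst : MapsTo f s t) (hs : s.Nonempty) (x : α) : infDist (f x) t ≤ infDist x s :=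
  (le_infDist hs).2 fun y hy =>
    (infDist_le_dist_of_mem (hst hy)).trans (by simpa using hf.dist_le_mul x y)

theorem infDist_ray_le_infDist_lift {m : ℕ} (y d : Em m) :
    infDist y (ray d) ≤ infDist (lift1 y) (ray (lift0 d)) :=
  (LipschitzWith.of_edist_le WithLp.edist_fst_le).infDist_le_of_mapsTo
    (mapsTo_ray (WithLp.fstₗ 2 ℝ (Em m) ℝ) (lift0 d)) ⟨0, zero_mem_ray _⟩ (lift1 y)

theorem lift1_ne_zero {m : ℕ} (y : Em m) : lift1 y ≠ 0 := by
  intro h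
  simpa [lift1] using congrArg WithLp.snd h

theorem dist_unit_to_ray_le_scaled_lifted_dist_general {m : ℕ} (y d : Em m) :
    infDist (‖y‖⁻¹ • y) (ray d) ≤
      (‖lift1 y‖ / ‖y‖) * infDist (‖lift1 y‖⁻¹ • lift1 y) (ray (lift0 d)) := by
  have hY : ‖lift1 y‖ ≠ 0 := norm_ne_zero_iff.2 (lift1_ne_zero y)
  have hscale : ‖lift1 y‖ / ‖y‖ * ‖lift1 y‖⁻¹ = ‖y‖⁻¹ := by field_simp
  rw [infDist_smul_ray (by positivity), infDist_smul_ray (by positivity), ← mul_assoc, hscale]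
  gcongr
  exact infDist_ray_le_infDist_lift y d

/-- For nonzero `y` and unit `d`,
`d(y/‖y‖, cone{d}) ≤ (‖(y,1)‖/‖y‖) · d((y,1)/‖(y,1)‖, cone{(d,0)})`. -/
theorem dist_unit_to_ray_le_scaled_lifted_dist {m : ℕ} (y d : Em m) (hy : y ≠ 0)
    (hd : ‖d‖ = 1) :
    infDist (‖y‖⁻¹ • y) (ray d) ≤
      (‖lift1 y‖ / ‖y‖) * infDist (‖lift1 y‖⁻¹ • lift1 y) (ray (lift0 d)) :=
  dist_unit_to_ray_le_scaled_lifted_dist_general y d
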